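/- arXiv:1301.3816 — 6 statements merged into one kernel-verified Lean document; each statement's English description precedes it below -/
import Mathlib

section
/- Suppose (A, B) ∈ ℝ^{ℓ×p} × ℝ^{m×p} is a global minimizer of J₄ over ℝ^{ℓ×p} × ℝ^{m×p}. Then for any C ∈ ℝ^{ℓ×m} satisfying A = C·B, the pair (C, L) with L = B·Bᵀ is a global minimizer of J₂ over ℝ^{ℓ×m} × S^{m,p}_+. -/
/-! For symmetric `K` one has `J₂(C, B Bᵀ) = J₄(C B, B)`, and every `L ∈ S^{m,p}_+` factors as
`L = B' B'ᵀ` with `B' ∈ ℝ^{m×p}` (diagonalize `L` and place the square roots of its at most `p`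
nonzero eigenvalues in distinct columns). Hence
`J₂(C', L) = J₄(C' B', B') ≥ J₄(A, B) = J₂(C, B Bᵀ)`. -/

open Matrix

/-- Frobenius inner product `⟨A, B⟩_F = tr(Aᵀ B)`. -/
noncomputable def frobInner {k l : ℕ} (A B : Matrix (Fin k) (Fin l) ℝ) : ℝ :=
  (Aᵀ * B).trace

/-- The objective `J₂(C, L)` of problem (2). -/
noncomputable def J2 {l m : ℕ} (K : Matrix (Fin l) (Fin l) ℝ)
    (W Y : Matrix (Fin l) (Fin m) ℝ) (lam : ℝ)
    (C : Matrix (Fin l) (Fin m) ℝ) (L : Matrix (Fin m) (Fin m) ℝ) : ℝ :=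
  frobInner (W ⊙ (Y - K * C * L)) (W ⊙ (Y - K * C * L)) / (2 * lam)
    + frobInner (Cᵀ * K * C) L / 2 + L.trace / 2

/-- The objective `J₄(A, B)` of problem (4). -/
noncomputable def J4 {l m p : ℕ} (K : Matrix (Fin l) (Fin l) ℝ)
    (W Y : Matrix (Fin l) (Fin m) ℝ) (lam : ℝ)
    (A : Matrix (Fin l) (Fin p) ℝ) (B : Matrix (Fin m) (Fin p) ℝ) : ℝ :=
  frobInner (W ⊙ (Y - K * A * Bᵀ)) (W ⊙ (Y - K * A * Bᵀ)) / (2 * lam)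
    + frobInner A (K * A) / 2 + frobInner B B / 2

theorem Matrix.exists_mul_transpose_eq_diagonal {ι κ : Type*} [Fintype ι] [DecidableEq ι]
    [Fintype κ] (d : ι → ℝ) (hd : 0 ≤ d) (hcard : Fintype.card {i // d i ≠ 0} ≤ Fintype.card κ) :
    ∃ S : Matrix ι κ ℝ, S * Sᵀ = diagonal d := by
  obtain ⟨e⟩ := Function.Embedding.nonempty_of_card_le hcard
  classical
  refine ⟨of fun i j => if h : d i ≠ 0 then if e ⟨i, h⟩ = j then √(d i) else 0 else 0, ?_⟩
  ext i k
  by_cases hi : d i = 0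
  · simp [mul_apply, hi, diagonal_apply]
  by_cases hk : d k = 0
  · simp only [ne_eq, dite_not, mul_apply, of_apply, transpose_apply, hk, ↓reduceDIte, mul_zero,
      Finset.sum_const_zero, diagonal_apply, right_eq_ite_iff]
    rintro rfl
    exact (hi hk).elim
  · simp only [ne_eq, dite_not, mul_apply, of_apply, hi, ↓reduceDIte, transpose_apply, hk,
      mul_ite, ite_mul, zero_mul, mul_zero, Finset.sum_ite_eq, Finset.mem_univ, ↓reduceIte,
      EmbeddingLike.apply_eq_iff_eq, Subtype.mk.injEq, diagonal_apply]
    split_ifs with hik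
    · subst hik
      exact Real.mul_self_sqrt (hd i)
    · rfl

theorem Matrix.PosSemidef.exists_eq_mul_transpose_of_rank_le {n κ : Type*} [Fintype n]
    [DecidableEq n] [Fintype κ] {L : Matrix n n ℝ} (hL : L.PosSemidef)
    (hr : L.rank ≤ Fintype.card κ) : ∃ B : Matrix n κ ℝ, L = B * Bᵀ := by
  obtain ⟨S, hS⟩ := exists_mul_transpose_eq_diagonal hL.1.eigenvalues
    (fun i => hL.eigenvalues_nonneg i) (hL.1.rank_eq_card_non_zero_eigs ▸ hr)
  refine ⟨(hL.1.eigenvectorUnitary : Matrix n n ℝ) * S, ?_⟩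
  conv_lhs => rw [hL.1.spectral_theorem]
  rw [transpose_mul, Matrix.mul_assoc _ S, ← Matrix.mul_assoc S, hS, ← Matrix.mul_assoc,
    Unitary.conjStarAlgAut_apply, star_eq_conjTranspose, conjTranspose_eq_transpose_of_trivial]
  rfl

theorem J2_mul_transpose_eq_J4 {l m p : ℕ} {K : Matrix (Fin l) (Fin l) ℝ} (hK : K.IsSymm)
    (W Y : Matrix (Fin l) (Fin m) ℝ) (lam : ℝ)
    (C : Matrix (Fin l) (Fin m) ℝ) (B : Matrix (Fin m) (Fin p) ℝ) :
    J2 K W Y lam C (B * Bᵀ) = J4 K W Y lam (C * B) B := by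
  have h_fit : K * C * (B * Bᵀ) = K * (C * B) * Bᵀ := by
    simp only [Matrix.mul_assoc]
  have h_reg : frobInner (Cᵀ * K * C) (B * Bᵀ) = frobInner (C * B) (K * (C * B)) := by
    unfold frobInner
    rw [transpose_mul, transpose_mul, transpose_transpose, hK.eq, ← Matrix.mul_assoc,
      trace_mul_comm]
    simp only [transpose_mul, Matrix.mul_assoc]
  have h_trace : (B * Bᵀ).trace = frobInner B B := trace_mul_comm B Bᵀ
  rw [J2, J4, h_fit, h_reg, h_trace]

theorem stmt0_general {l m p : ℕ}
    (K : Matrix (Fin l) (Fin l) ℝ) (hK : K.PosSemidef)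
    (W Y : Matrix (Fin l) (Fin m) ℝ)
    (lam : ℝ)
    (A : Matrix (Fin l) (Fin p) ℝ) (B : Matrix (Fin m) (Fin p) ℝ)
    (hmin : ∀ (A' : Matrix (Fin l) (Fin p) ℝ) (B' : Matrix (Fin m) (Fin p) ℝ),
      J4 K W Y lam A B ≤ J4 K W Y lam A' B')
    (C : Matrix (Fin l) (Fin m) ℝ) (hC : A = C * B) :
    (B * Bᵀ).PosSemidef ∧ (B * Bᵀ).rank ≤ p ∧
      ∀ (C' : Matrix (Fin l) (Fin m) ℝ) (L' : Matrix (Fin m) (Fin m) ℝ),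
        L'.PosSemidef → L'.rank ≤ p →
        J2 K W Y lam C (B * Bᵀ) ≤ J2 K W Y lam C' L' := by
  have hKs : K.IsSymm := isHermitian_iff_isSymm.mp hK.1
  refine ⟨?_, (rank_self_mul_transpose B).trans_le (rank_le_width B), ?_⟩
  · simpa only [conjTranspose_eq_transpose_of_trivial] using posSemidef_self_mul_conjTranspose B
  · intro C' L' hL' hr
    obtain ⟨B', rfl⟩ := hL'.exists_eq_mul_transpose_of_rank_le (κ := Fin p)
      (hr.trans_eq (Fintype.card_fin p).symm)
    calc J2 K W Y lam C (B * Bᵀ) = J4 K W Y lam A B := by rw [J2_mul_transpose_eq_J4 hKs, hC]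
      _ ≤ J4 K W Y lam (C' * B') B' := hmin _ _
      _ = J2 K W Y lam C' (B' * B'ᵀ) := (J2_mul_transpose_eq_J4 hKs W Y lam C' B').symm

/-- If `(A, B)` is a global minimizer of `J₄`, then for every `C` with `A = C * B`,
the pair `(C, L)` with `L = B * Bᵀ` is a global minimizer of `J₂` over
`ℝ^{ℓ×m} × S^{m,p}_+`. -/
theorem stmt0 {l m p : ℕ} (hl : 1 ≤ l) (hm : 1 ≤ m) (hp : 1 ≤ p)
    (K : Matrix (Fin l) (Fin l) ℝ) (hK : K.PosSemidef)
    (W Y : Matrix (Fin l) (Fin m) ℝ)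
    (hW : ∀ i j, W i j = 0 ∨ W i j = 1) (hY : W ⊙ Y = Y)
    (lam : ℝ) (hlam : 0 < lam)
    (A : Matrix (Fin l) (Fin p) ℝ) (B : Matrix (Fin m) (Fin p) ℝ)
    (hmin : ∀ (A' : Matrix (Fin l) (Fin p) ℝ) (B' : Matrix (Fin m) (Fin p) ℝ),
      J4 K W Y lam A B ≤ J4 K W Y lam A' B')
    (C : Matrix (Fin l) (Fin m) ℝ) (hC : A = C * B) :
    (B * Bᵀ).PosSemidef ∧ (B * Bᵀ).rank ≤ p ∧
      ∀ (C' : Matrix (Fin l) (Fin m) ℝ) (L' : Matrix (Fin m) (Fin m) ℝ),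
        L'.PosSemidef → L'.rank ≤ p →
        J2 K W Y lam C (B * Bᵀ) ≤ J2 K W Y lam C' L' :=
  stmt0_general K hK W Y lam A B hmin C hC
end

section
/- Suppose Θ ∈ ℝ^{ℓ×m} is a global minimizer of G(Θ) = ‖Y − KΘ‖_W²/(2λ) + tr((ΘᵀKΘ)^{1/2}) over the set of matrices Θ ∈ ℝ^{ℓ×m} with rank(Θ) ≤ p, where (ΘᵀKΘ)^{1/2} is the positive semidefinite square root of ΘᵀKΘ. Let L = (ΘᵀKΘ)^{1/2}, and let C ∈ ℝ^{ℓ×m} be any matrix with C·L = Θ. Then the pair (C, L) is a global minimizer of J₂ over ℝ^{ℓ×m} × S^{m,p}_+. -/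
/-!
Write `M = CᵀKC`. From `C L = Θ` and `L² = ΘᵀKΘ` we get `L M L = L²`. Factoring
`L = BᵀB`, the kernel of `BᵀB` is that of `B`, which turns this into `B M Bᵀ = B Bᵀ`, hence
`⟨M, L⟩_F = tr L`; together with `tr((ΘᵀKΘ)^{1/2}) = tr L` this gives `J₂(C, L) = G(Θ)`.

For a competitor `(C', L')` put `Θ' = C'L'`, of rank at most `p`. Factoring `K = AᵀA` and
`L' = BᵀB`, we get `A Θ' = P Q` with `P = A C' Bᵀ` and `Q = B`, so `tr((Θ'ᵀKΘ')^{1/2})` is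
the nuclear norm of `P Q`, which is at most
`(‖P‖_F² + ‖Q‖_F²)/2 = (⟨C'ᵀKC', L'⟩_F + tr L')/2`. Hence
`J₂(C, L) = G(Θ) ≤ G(Θ') ≤ J₂(C', L')`.
-/

open Matrix

/-- Trace of the positive semidefinite square root of a matrix (`0` if the matrix is
not positive semidefinite, a case which never occurs below). -/
noncomputable def traceSqrt {m : ℕ} (M : Matrix (Fin m) (Fin m) ℝ) : ℝ :=
  letI := Classical.propDecidable M.PosSemidef
  if h : M.PosSemidef then
    (h.1.eigenvectorUnitary.1 * diagonal (Real.sqrt ∘ h.1.eigenvalues) *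
      (star h.1.eigenvectorUnitary : Matrix (Fin m) (Fin m) ℝ)).trace else 0

/-- The objective `G(Θ)` of the reduced-rank problem of Lemma 2. -/
noncomputable def Gobj {l m : ℕ} (K : Matrix (Fin l) (Fin l) ℝ)
    (W Y : Matrix (Fin l) (Fin m) ℝ) (lam : ℝ)
    (Θ : Matrix (Fin l) (Fin m) ℝ) : ℝ :=
  frobInner (W ⊙ (Y - K * Θ)) (W ⊙ (Y - K * Θ)) / (2 * lam)
    + traceSqrt (Θᵀ * K * Θ)

section Frobenius

variable {a b c : ℕ}

lemma frobInner_self_nonneg (A : Matrix (Fin a) (Fin b) ℝ) : 0 ≤ frobInner A A := by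
  simpa [frobInner] using (posSemidef_conjTranspose_mul_self A).trace_nonneg

lemma frobInner_self_eq_trace_mul_transpose (A : Matrix (Fin a) (Fin b) ℝ) :
    frobInner A A = (A * Aᵀ).trace :=
  trace_mul_comm _ _

lemma frobInner_comm (A B : Matrix (Fin a) (Fin b) ℝ) : frobInner A B = frobInner B A := by
  rw [frobInner, frobInner, ← trace_transpose, transpose_mul, transpose_transpose]

lemma two_mul_frobInner_le (A B : Matrix (Fin a) (Fin b) ℝ) :
    2 * frobInner A B ≤ frobInner A A + frobInner B B := by
  have h := frobInner_self_nonneg (A - B)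
  have hBA := frobInner_comm B A
  simp only [frobInner, transpose_sub, Matrix.sub_mul, Matrix.mul_sub, trace_sub] at h hBA ⊢
  linarith

lemma frobInner_mul_orthogonal {Q : Matrix (Fin a) (Fin b) ℝ} {V : Matrix (Fin b) (Fin c) ℝ}
    (hV : V * Vᵀ = 1) : frobInner (Q * V) (Q * V) = frobInner Q Q := by
  rw [frobInner_self_eq_trace_mul_transpose, frobInner_self_eq_trace_mul_transpose,
    transpose_mul, Matrix.mul_assoc, ← Matrix.mul_assoc V, hV, Matrix.one_mul]

lemma frobInner_mul_le_of_mul_transpose_mul {U : Matrix (Fin a) (Fin b) ℝ}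
    (hU : U * Uᵀ * U = U) (A : Matrix (Fin c) (Fin a) ℝ) :
    frobInner (A * U) (A * U) ≤ frobInner A A := by
  set F := 1 - U * Uᵀ
  have hF : F * Fᵀ = F := by
    have hUU : U * Uᵀ * (U * Uᵀ) = U * Uᵀ := by rw [← Matrix.mul_assoc, hU]
    simp only [F, transpose_sub, transpose_one, transpose_mul, transpose_transpose,
      Matrix.sub_mul, Matrix.mul_sub, Matrix.one_mul, Matrix.mul_one, hUU]
    abel
  calc frobInner (A * U) (A * U) = (A * (U * Uᵀ) * Aᵀ).trace := by
        rw [frobInner_self_eq_trace_mul_transpose, transpose_mul]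
        simp only [Matrix.mul_assoc]
    _ = (A * Aᵀ).trace - (A * F * Aᵀ).trace := by
        simp only [F, Matrix.mul_sub, Matrix.sub_mul, trace_sub, Matrix.mul_one]
        ring
    _ = frobInner A A - frobInner (A * F) (A * F) := by
        rw [frobInner_self_eq_trace_mul_transpose, frobInner_self_eq_trace_mul_transpose (A * F),
          transpose_mul, ← Matrix.mul_assoc, Matrix.mul_assoc A F Fᵀ, hF]
    _ ≤ frobInner A A := sub_le_self _ (frobInner_self_nonneg _)

end Frobenius

section PosSemidef

variable {n : Type*}

lemma Matrix.PosSemidef.transpose_eq {A : Matrix n n ℝ} (hA : A.PosSemidef) : Aᵀ = A := by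
  simpa using hA.1.eq

variable [Fintype n] [DecidableEq n]

open scoped MatrixOrder in
lemma Matrix.PosSemidef.exists_eq_transpose_mul_self {A : Matrix n n ℝ} (hA : A.PosSemidef) :
    ∃ B : Matrix n n ℝ, A = Bᵀ * B := by
  obtain ⟨B, hB⟩ := CStarAlgebra.nonneg_iff_eq_star_mul_self.mp hA.nonneg
  exact ⟨B, by rwa [star_eq_conjTranspose, conjTranspose_eq_transpose_of_trivial] at hB⟩

lemma trace_mul_eq_trace_of_mul_mul_eq {M L : Matrix n n ℝ} (hM : Mᵀ = M) (hL : L.PosSemidef)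
    (h : L * M * L = L * L) : (M * L).trace = L.trace := by
  obtain ⟨B, rfl⟩ := hL.exists_eq_transpose_mul_self
  have cancel (X Y : Matrix n n ℝ) (hXY : Bᵀ * B * X = Bᵀ * B * Y) : B * X = B * Y := by
    rw [← sub_eq_zero, ← Matrix.mul_sub] at hXY ⊢
    simpa using (conjTranspose_mul_self_mul_eq_zero B (X - Y)).mp (by simpa using hXY)
  have h1 : B * M * (Bᵀ * B) = B * (Bᵀ * B) := by
    simpa [Matrix.mul_assoc] using cancel _ _ (by simpa [Matrix.mul_assoc] using h)
  have h2 : B * M * Bᵀ = B * Bᵀ := by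
    have h1t := congrArg transpose h1
    simp only [transpose_mul, transpose_transpose, hM, Matrix.mul_assoc] at h1t
    simpa [Matrix.mul_assoc] using cancel _ _ (by simpa [Matrix.mul_assoc] using h1t)
  rw [← Matrix.mul_assoc, trace_mul_comm, ← Matrix.mul_assoc, h2, trace_mul_comm]

end PosSemidef

section TraceSqrt

open scoped MatrixOrder in
lemma Matrix.PosSemidef.traceSqrt_eq_trace_sqrt {n : ℕ} {M : Matrix (Fin n) (Fin n) ℝ}
    (hM : M.PosSemidef) : traceSqrt M = (CFC.sqrt M).trace := by
  rw [CFC.sqrt_eq_real_sqrt M hM.nonneg, cfcₙ_eq_cfc, hM.1.cfc_eq, traceSqrt, dif_pos hM,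
    IsHermitian.cfc, Unitary.conjStarAlgAut_apply]
  rfl

open scoped MatrixOrder in
lemma Matrix.PosSemidef.traceSqrt_mul_self {n : ℕ} {L : Matrix (Fin n) (Fin n) ℝ}
    (hL : L.PosSemidef) : traceSqrt (L * L) = L.trace := by
  rw [(sq L ▸ hL.pow 2 : (L * L).PosSemidef).traceSqrt_eq_trace_sqrt,
    CFC.sqrt_mul_self L hL.nonneg]

lemma Matrix.PosSemidef.exists_traceSqrt_eq_sum {n : ℕ} {N : Matrix (Fin n) (Fin n) ℝ}
    (hN : N.PosSemidef) :
    ∃ (V : Matrix (Fin n) (Fin n) ℝ) (d : Fin n → ℝ), V * Vᵀ = 1 ∧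
      Vᵀ * N * V = diagonal d * diagonal d ∧ traceSqrt N = ∑ i, d i := by
  set V : Matrix (Fin n) (Fin n) ℝ := ↑hN.1.eigenvectorUnitary
  have hVt : star V = Vᵀ := by rw [star_eq_conjTranspose, conjTranspose_eq_transpose_of_trivial]
  refine ⟨V, fun i => √(hN.1.eigenvalues i), ?_, ?_, ?_⟩
  · rw [← hVt]
    exact Unitary.coe_mul_star_self _
  · have hdiag := hN.1.conjStarAlgAut_star_eigenvectorUnitary
    rw [Unitary.conjStarAlgAut_apply, Unitary.coe_star, star_star, hVt] at hdiag
    rw [hdiag, diagonal_mul_diagonal]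
    congr 1
    ext i
    simp [Real.mul_self_sqrt (hN.eigenvalues_nonneg i)]
  · rw [traceSqrt, dif_pos hN, trace_mul_cycle, Unitary.coe_star_mul_self, Matrix.one_mul,
      trace_diagonal]
    rfl

theorem two_mul_traceSqrt_le {a b c : ℕ} (P : Matrix (Fin a) (Fin c) ℝ)
    (Q : Matrix (Fin c) (Fin b) ℝ) :
    2 * traceSqrt ((P * Q)ᵀ * (P * Q)) ≤ frobInner P P + frobInner Q Q := by
  obtain ⟨V, d, hV, hdiag, htr⟩ :=
    (by simpa using posSemidef_conjTranspose_mul_self (P * Q) :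
      ((P * Q)ᵀ * (P * Q)).PosSemidef).exists_traceSqrt_eq_sum
  set X := P * Q * V
  have hX : Xᵀ * X = diagonal d * diagonal d := by
    rw [← hdiag]
    simp only [X, transpose_mul, Matrix.mul_assoc]
  -- the partial isometry of the polar decomposition `X = U |X|`; `(d i)⁻¹ = 0` when `d i = 0`
  set U := X * diagonal d⁻¹
  have hUX : Uᵀ * X = diagonal d := by
    simp only [U, transpose_mul, diagonal_transpose, Matrix.mul_assoc, hX, diagonal_mul_diagonal]
    congr 1
    ext i
    rw [← mul_assoc, Pi.inv_apply, inv_mul_mul_self]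
  have hU : U * Uᵀ * U = U := by
    rw [Matrix.mul_assoc, show Uᵀ * U = diagonal d * diagonal d⁻¹ by
      rw [← hUX]; simp only [U, Matrix.mul_assoc]]
    simp only [U, Matrix.mul_assoc, diagonal_mul_diagonal]
    congr 2
    ext i
    simpa [mul_assoc] using mul_inv_mul_cancel (d i)⁻¹
  calc 2 * traceSqrt ((P * Q)ᵀ * (P * Q)) = 2 * frobInner (Pᵀ * U) (Q * V) := by
        rw [htr, frobInner, transpose_mul, transpose_transpose, ← trace_diagonal, ← hUX]
        simp only [X, Matrix.mul_assoc]
    _ ≤ frobInner (Pᵀ * U) (Pᵀ * U) + frobInner (Q * V) (Q * V) := two_mul_frobInner_le _ _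
    _ ≤ frobInner Pᵀ Pᵀ + frobInner Q Q := by
        rw [frobInner_mul_orthogonal hV]
        gcongr
        exact frobInner_mul_le_of_mul_transpose_mul hU _
    _ = frobInner P P + frobInner Q Q := by
        rw [frobInner, transpose_transpose, ← frobInner_self_eq_trace_mul_transpose]

lemma two_mul_traceSqrt_conj_le {l m : ℕ} {K : Matrix (Fin l) (Fin l) ℝ}
    {L : Matrix (Fin m) (Fin m) ℝ} (hK : K.PosSemidef) (hL : L.PosSemidef)
    (C : Matrix (Fin l) (Fin m) ℝ) :
    2 * traceSqrt ((C * L)ᵀ * K * (C * L)) ≤ frobInner (Cᵀ * K * C) L + L.trace := by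
  obtain ⟨A, rfl⟩ := hK.exists_eq_transpose_mul_self
  obtain ⟨B, rfl⟩ := hL.exists_eq_transpose_mul_self
  convert two_mul_traceSqrt_le (A * C * Bᵀ) B using 2
  · simp only [transpose_mul, transpose_transpose, Matrix.mul_assoc]
  · simp only [frobInner, transpose_mul, transpose_transpose, Matrix.mul_assoc]
    rw [trace_mul_comm B]
    simp only [Matrix.mul_assoc]
  · rfl

end TraceSqrt

section Objectives

variable {l m : ℕ} {K : Matrix (Fin l) (Fin l) ℝ} {W Y : Matrix (Fin l) (Fin m) ℝ} {lam : ℝ}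
  {Θ C : Matrix (Fin l) (Fin m) ℝ} {L : Matrix (Fin m) (Fin m) ℝ}

lemma rank_le_of_mul_self_eq (hL : Lᵀ = L) (h : L * L = Θᵀ * K * Θ) : L.rank ≤ Θ.rank :=
  calc L.rank = (Lᵀ * L).rank := (rank_transpose_mul_self L).symm
    _ = (Θᵀ * (K * Θ)).rank := by rw [hL, h, Matrix.mul_assoc]
    _ ≤ Θᵀ.rank := rank_mul_le_left _ _
    _ = Θ.rank := rank_transpose Θ

lemma J2_eq_Gobj (hK : K.PosSemidef) (hL : L.PosSemidef) (hLsq : L * L = Θᵀ * K * Θ)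
    (hCL : C * L = Θ) : J2 K W Y lam C L = Gobj K W Y lam Θ := by
  have hM : (Cᵀ * K * C)ᵀ = Cᵀ * K * C := by
    simp only [transpose_mul, transpose_transpose, hK.transpose_eq, Matrix.mul_assoc]
  have hLML : L * (Cᵀ * K * C) * L = L * L := by
    rw [hLsq, ← hCL, transpose_mul, hL.transpose_eq]
    simp only [Matrix.mul_assoc]
  have htr : frobInner (Cᵀ * K * C) L = L.trace := by
    rw [frobInner, hM]
    exact trace_mul_eq_trace_of_mul_mul_eq hM hL hLML
  rw [J2, Gobj, Matrix.mul_assoc K, hCL, ← hLsq, hL.traceSqrt_mul_self, htr]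
  ring

lemma Gobj_mul_le_J2 (hK : K.PosSemidef) (hL : L.PosSemidef) :
    Gobj K W Y lam (C * L) ≤ J2 K W Y lam C L := by
  have := two_mul_traceSqrt_conj_le hK hL C
  rw [Gobj, J2, ← Matrix.mul_assoc K]
  linarith

end Objectives

theorem stmt1_general {l m p : ℕ}
    (K : Matrix (Fin l) (Fin l) ℝ) (hK : K.PosSemidef)
    (W Y : Matrix (Fin l) (Fin m) ℝ)
    (lam : ℝ)
    (Θ : Matrix (Fin l) (Fin m) ℝ) (hΘrank : Θ.rank ≤ p)
    (hmin : ∀ Θ' : Matrix (Fin l) (Fin m) ℝ, Θ'.rank ≤ p →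
      Gobj K W Y lam Θ ≤ Gobj K W Y lam Θ')
    (L : Matrix (Fin m) (Fin m) ℝ) (hL : L.PosSemidef)
    (hLsq : L * L = Θᵀ * K * Θ)
    (C : Matrix (Fin l) (Fin m) ℝ) (hCL : C * L = Θ) :
    L.rank ≤ p ∧
      ∀ (C' : Matrix (Fin l) (Fin m) ℝ) (L' : Matrix (Fin m) (Fin m) ℝ),
        L'.PosSemidef → L'.rank ≤ p →
        J2 K W Y lam C L ≤ J2 K W Y lam C' L' := by
  refine ⟨(rank_le_of_mul_self_eq hL.transpose_eq hLsq).trans hΘrank,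
    fun C' L' hL' hrankL' => ?_⟩
  calc J2 K W Y lam C L = Gobj K W Y lam Θ := J2_eq_Gobj hK hL hLsq hCL
    _ ≤ Gobj K W Y lam (C' * L') := hmin _ ((rank_mul_le_right C' L').trans hrankL')
    _ ≤ J2 K W Y lam C' L' := Gobj_mul_le_J2 hK hL'

/-- If `Θ` is a global minimizer of `G` over matrices of rank at most `p`, then with
`L = (Θᵀ K Θ)^{1/2}` (characterized as the PSD matrix with `L * L = Θᵀ * K * Θ`) and
any `C` with `C * L = Θ`, the pair `(C, L)` is a global minimizer of `J₂` over
`ℝ^{ℓ×m} × S^{m,p}_+`. -/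
theorem stmt1 {l m p : ℕ} (hl : 1 ≤ l) (hm : 1 ≤ m) (hp : 1 ≤ p)
    (K : Matrix (Fin l) (Fin l) ℝ) (hK : K.PosSemidef)
    (W Y : Matrix (Fin l) (Fin m) ℝ)
    (hW : ∀ i j, W i j = 0 ∨ W i j = 1) (hY : W ⊙ Y = Y)
    (lam : ℝ) (hlam : 0 < lam)
    (Θ : Matrix (Fin l) (Fin m) ℝ) (hΘrank : Θ.rank ≤ p)
    (hmin : ∀ Θ' : Matrix (Fin l) (Fin m) ℝ, Θ'.rank ≤ p →
      Gobj K W Y lam Θ ≤ Gobj K W Y lam Θ')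
    (L : Matrix (Fin m) (Fin m) ℝ) (hL : L.PosSemidef)
    (hLsq : L * L = Θᵀ * K * Θ)
    (C : Matrix (Fin l) (Fin m) ℝ) (hCL : C * L = Θ) :
    L.rank ≤ p ∧
      ∀ (C' : Matrix (Fin l) (Fin m) ℝ) (L' : Matrix (Fin m) (Fin m) ℝ),
        L'.PosSemidef → L'.rank ≤ p →
        J2 K W Y lam C L ≤ J2 K W Y lam C' L' :=
  stmt1_general K hK W Y lam Θ hΘrank hmin L hL hLsq C hCL
end

section
/- Let M ∈ ℝ^{m×m} be symmetric positive semidefinite and let L ∈ ℝ^{m×m} be symmetric positive definite. Then tr(M·L⁻¹)/2 + tr(L)/2 ≥ tr(M^{1/2}), where M^{1/2} denotes the positive semidefinite square root of M. Moreover, if M is positive definite, then equality holds for L = M^{1/2}. -/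
/-!
With `S = M^{1/2}`, the quantity `tr(M L⁻¹) - 2 tr S + tr L` is the trace of the positive
semidefinite matrix `(S - L)ᴴ L⁻¹ (S - L)`, hence nonnegative. For the equality case,
`M S⁻¹ = S` as soon as `M` is invertible.
-/

open Matrix

open scoped ComplexOrder in
noncomputable def Matrix.PosSemidef.sqrt {n : Type*} [Fintype n] [DecidableEq n]
    {𝕜 : Type*} [RCLike 𝕜] {A : Matrix n n 𝕜} (hA : A.PosSemidef) : Matrix n n 𝕜 :=
  hA.1.eigenvectorUnitary.1 * diagonal ((↑) ∘ (√·) ∘ hA.1.eigenvalues) *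
  (star hA.1.eigenvectorUnitary : Matrix n n 𝕜)

open scoped ComplexOrder

namespace Matrix

variable {n 𝕜 : Type*} [Fintype n] [DecidableEq n] [RCLike 𝕜]

theorem PosSemidef.posSemidef_sqrt {A : Matrix n n 𝕜} (hA : A.PosSemidef) :
    hA.sqrt.PosSemidef := by
  have hD : (diagonal ((↑) ∘ (√·) ∘ hA.1.eigenvalues : n → 𝕜)).PosSemidef :=
    posSemidef_diagonal_iff.mpr fun i => by simp [Real.sqrt_nonneg]
  simpa [PosSemidef.sqrt, star_eq_conjTranspose] using
    hD.mul_mul_conjTranspose_same hA.1.eigenvectorUnitary.1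

theorem PosSemidef.sqrt_mul_self {A : Matrix n n 𝕜} (hA : A.PosSemidef) :
    hA.sqrt * hA.sqrt = A := by
  set U : Matrix n n 𝕜 := hA.1.eigenvectorUnitary.1
  have hU : star U * U = 1 := Unitary.coe_star_mul_self _
  have hD : diagonal ((↑) ∘ (√·) ∘ hA.1.eigenvalues : n → 𝕜) *
      diagonal ((↑) ∘ (√·) ∘ hA.1.eigenvalues) = diagonal ((↑) ∘ hA.1.eigenvalues) := by
    rw [diagonal_mul_diagonal]
    congr 1
    funext i
    simp [← RCLike.ofReal_mul, Real.mul_self_sqrt (hA.eigenvalues_nonneg i)]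
  conv_rhs => rw [hA.1.spectral_theorem, Unitary.conjStarAlgAut_apply]
  calc hA.sqrt * hA.sqrt
      = U * diagonal ((↑) ∘ (√·) ∘ hA.1.eigenvalues) * (star U * U) *
          diagonal ((↑) ∘ (√·) ∘ hA.1.eigenvalues) * star U := by
        simp only [PosSemidef.sqrt, U, Matrix.mul_assoc]
    _ = _ := by rw [hU, Matrix.mul_one, Matrix.mul_assoc U, hD]

theorem PosSemidef.isUnit_det_sqrt {A : Matrix n n 𝕜} (hA : A.PosSemidef) (hdet : IsUnit A.det) :
    IsUnit hA.sqrt.det :=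
  isUnit_of_mul_isUnit_left (by rwa [← det_mul, hA.sqrt_mul_self])

theorem PosSemidef.mul_inv_sqrt {A : Matrix n n 𝕜} (hA : A.PosSemidef) (hdet : IsUnit A.det) :
    A * hA.sqrt⁻¹ = hA.sqrt := by
  calc A * hA.sqrt⁻¹ = hA.sqrt * hA.sqrt * hA.sqrt⁻¹ := by rw [hA.sqrt_mul_self]
    _ = hA.sqrt := by
      rw [Matrix.mul_assoc, mul_nonsing_inv _ (hA.isUnit_det_sqrt hdet), Matrix.mul_one]

theorem two_mul_trace_le_trace_mul_self_mul_inv_add_trace {S L : Matrix n n 𝕜}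
    (hS : S.IsHermitian) (hL : L.PosDef) :
    2 * S.trace ≤ (S * S * L⁻¹).trace + L.trace := by
  have hinv_mul : L⁻¹ * L = 1 := nonsing_inv_mul _ ((isUnit_iff_isUnit_det L).mp hL.isUnit)
  have hmul_inv : L * L⁻¹ = 1 := mul_nonsing_inv _ ((isUnit_iff_isUnit_det L).mp hL.isUnit)
  have hexpand : (S - L)ᴴ * L⁻¹ * (S - L) = S * L⁻¹ * S - S - S + L := by
    rw [conjTranspose_sub, hS.eq, hL.isHermitian.eq]
    simp only [Matrix.sub_mul, Matrix.mul_sub, Matrix.mul_assoc, hinv_mul, hmul_inv, Matrix.one_mul,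
      Matrix.mul_one]
    abel
  have hnonneg := (hL.inv.posSemidef.conjTranspose_mul_mul_same (S - L)).trace_nonneg
  rw [hexpand, trace_add, trace_sub, trace_sub, trace_mul_cycle] at hnonneg
  rw [← sub_nonneg]
  convert hnonneg using 1
  ring

end Matrix

/-- For `M` symmetric PSD and `L` symmetric positive definite,
`tr(M L⁻¹)/2 + tr(L)/2 ≥ tr(M^{1/2})`; if moreover `M` is positive definite,
equality holds for `L = M^{1/2}`. -/
theorem stmt6 {m : ℕ} (M L : Matrix (Fin m) (Fin m) ℝ)
    (hM : M.PosSemidef) (hL : L.PosDef) :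
    hM.sqrt.trace ≤ (M * L⁻¹).trace / 2 + L.trace / 2 ∧
      (M.PosDef →
        (M * (hM.sqrt)⁻¹).trace / 2 + hM.sqrt.trace / 2 = hM.sqrt.trace) := by
  constructor
  · have htrace := two_mul_trace_le_trace_mul_self_mul_inv_add_trace hM.posSemidef_sqrt.isHermitian hL
    rw [hM.sqrt_mul_self] at htrace
    linarith
  · intro hMpd
    rw [hM.mul_inv_sqrt ((isUnit_iff_isUnit_det M).mp hMpd.isUnit)]
    ring
end

section
/- Let C ∈ ℝ^{ℓ×m} satisfy W ⊙ [K·(W ⊙ C)·B·Bᵀ] + λC = Y. Then C = W ⊙ C, and the matrix A = C·B satisfies the sufficient optimality condition W ⊙ (K A Bᵀ)·B + λA = Y·B. -/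
open Matrix

namespace Matrix

variable {ι κ R : Type*}

theorem hadamard_hadamard_self_of_zero_or_one [MulZeroOneClass R] {W : Matrix ι κ R}
    (hW : ∀ i j, W i j = 0 ∨ W i j = 1) (X : Matrix ι κ R) : W ⊙ (W ⊙ X) = W ⊙ X := by
  ext i j
  rcases hW i j with h | h <;> simp [h]

theorem hadamard_eq_self_of_hadamard_add_smul_eq [CommRing R] [NoZeroDivisors R]
    {W Y Z C : Matrix ι κ R} {c : R} (hW : ∀ i j, W i j = 0 ∨ W i j = 1) (hY : W ⊙ Y = Y)
    (hc : c ≠ 0) (h : W ⊙ Z + c • C = Y) : W ⊙ C = C := by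
  have hmasked : W ⊙ Z + W ⊙ (c • C) = Y := by
    rw [← hadamard_hadamard_self_of_zero_or_one hW Z, ← hadamard_add, h, hY]
  have hsmul : c • (W ⊙ C) = c • C := by
    rw [← hadamard_smul]
    exact add_left_cancel (hmasked.trans h.symm)
  ext i j
  exact mul_left_cancel₀ hc (congrFun (congrFun hsmul i) j)

end Matrix

theorem stmt12_general {l m p : ℕ}
    (K : Matrix (Fin l) (Fin l) ℝ)
    (W Y : Matrix (Fin l) (Fin m) ℝ)
    (hW : ∀ i j, W i j = 0 ∨ W i j = 1) (hY : W ⊙ Y = Y)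
    (lam : ℝ) (hlam : 0 < lam)
    (B : Matrix (Fin m) (Fin p) ℝ) (C : Matrix (Fin l) (Fin m) ℝ)
    (hC : W ⊙ (K * (W ⊙ C) * B * Bᵀ) + lam • C = Y) :
    C = W ⊙ C ∧
      (W ⊙ (K * (C * B) * Bᵀ)) * B + lam • (C * B) = Y * B := by
  have hCW : W ⊙ C = C := hadamard_eq_self_of_hadamard_add_smul_eq hW hY hlam.ne' hC
  refine ⟨hCW.symm, ?_⟩
  rw [hCW] at hC
  calc W ⊙ (K * (C * B) * Bᵀ) * B + lam • (C * B)
      = (W ⊙ (K * C * B * Bᵀ) + lam • C) * B := by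
        rw [Matrix.add_mul, Matrix.smul_mul, Matrix.mul_assoc K C B]
    _ = Y * B := by rw [hC]

/-- If `C` satisfies `W ⊙ [K (W ⊙ C) B Bᵀ] + λ C = Y`, then `C = W ⊙ C` and
`A = C B` satisfies the sufficient optimality condition
`W ⊙ (K A Bᵀ) B + λ A = Y B`. -/
theorem stmt12 {l m p : ℕ} (hl : 1 ≤ l) (hm : 1 ≤ m) (hp : 1 ≤ p)
    (K : Matrix (Fin l) (Fin l) ℝ) (hK : K.PosSemidef)
    (W Y : Matrix (Fin l) (Fin m) ℝ)
    (hW : ∀ i j, W i j = 0 ∨ W i j = 1) (hY : W ⊙ Y = Y)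
    (lam : ℝ) (hlam : 0 < lam)
    (B : Matrix (Fin m) (Fin p) ℝ) (C : Matrix (Fin l) (Fin m) ℝ)
    (hC : W ⊙ (K * (W ⊙ C) * B * Bᵀ) + lam • C = Y) :
    C = W ⊙ C ∧
      (W ⊙ (K * (C * B) * Bᵀ)) * B + lam • (C * B) = Y * B :=
  stmt12_general K W Y hW hY lam hlam B C hC
end

section
/- Suppose K = F·Fᵀ for some F ∈ ℝ^{ℓ×r}. Let A_F ∈ ℝ^{r×p} satisfy Fᵀ·(W ⊙ (F A_F Bᵀ))·B + λ A_F = Fᵀ·Y·B, and let A ∈ ℝ^{ℓ×p} satisfy Fᵀ·A = A_F. Then K·[(W ⊙ (K A Bᵀ − Y))·B/λ + A] = 0. -/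
/-!
Write `R := W ⊙ (K A Bᵀ − Y)` for the masked residual. Since `K = F Fᵀ` and `Fᵀ A = A_F`,
we have `K A = F A_F`, and `W ⊙ Y = Y` turns `R` into `W ⊙ (F A_F Bᵀ) − Y`. The normal equation
for `A_F` then says exactly `Fᵀ R B = −λ A_F`, so `Fᵀ (R B / λ + A) = −A_F + A_F = 0`, and
multiplying by `F` gives the claim because `K = F Fᵀ`.
-/

open Matrix

namespace Matrix

variable {m n α : Type*}

theorem hadamard_sub [NonUnitalNonAssocRing α] (A B C : Matrix m n α) :
    A ⊙ (B - C) = A ⊙ B - A ⊙ C :=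
  ext fun _ _ => mul_sub _ _ _

end Matrix

section NormalEquation

variable {ι κ ρ π 𝕜 : Type*} [Fintype ι] [Fintype κ] [Fintype ρ] [Fintype π]

theorem transpose_mul_masked_residual_mul_eq_neg_smul [CommRing 𝕜] {W Y : Matrix ι κ 𝕜}
    (hY : W ⊙ Y = Y) {lam : 𝕜} {B : Matrix κ π 𝕜} {F : Matrix ι ρ 𝕜} {AF : Matrix ρ π 𝕜}
    (hAF : Fᵀ * (W ⊙ (F * AF * Bᵀ)) * B + lam • AF = Fᵀ * Y * B) :
    Fᵀ * ((W ⊙ (F * AF * Bᵀ - Y)) * B) = -(lam • AF) := by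
  rw [hadamard_sub, hY, Matrix.sub_mul, Matrix.mul_sub, ← Matrix.mul_assoc,
    ← Matrix.mul_assoc]
  linear_combination (norm := abel) hAF

theorem gram_mul_masked_residual_smul_add_eq_zero [Field 𝕜] {W Y : Matrix ι κ 𝕜}
    (hY : W ⊙ Y = Y) {lam : 𝕜} (hlam : lam ≠ 0) {B : Matrix κ π 𝕜} {F : Matrix ι ρ 𝕜}
    {AF : Matrix ρ π 𝕜}
    (hAF : Fᵀ * (W ⊙ (F * AF * Bᵀ)) * B + lam • AF = Fᵀ * Y * B)
    {A : Matrix ι π 𝕜} (hA : Fᵀ * A = AF) :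
    F * Fᵀ * (lam⁻¹ • ((W ⊙ (F * Fᵀ * A * Bᵀ - Y)) * B) + A) = 0 := by
  have hKA : F * Fᵀ * A = F * AF := by rw [Matrix.mul_assoc, hA]
  calc F * Fᵀ * (lam⁻¹ • ((W ⊙ (F * Fᵀ * A * Bᵀ - Y)) * B) + A)
      = F * (lam⁻¹ • (Fᵀ * ((W ⊙ (F * AF * Bᵀ - Y)) * B)) + AF) := by
        rw [hKA, Matrix.mul_assoc, Matrix.mul_add, Matrix.mul_smul, hA]
    _ = 0 := by
        rw [transpose_mul_masked_residual_mul_eq_neg_smul hY hAF, smul_neg, smul_smul,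
          inv_mul_cancel₀ hlam, one_smul, neg_add_cancel, Matrix.mul_zero]

end NormalEquation

theorem stmt14_general {l m p r : ℕ}
    (W Y : Matrix (Fin l) (Fin m) ℝ)
    (hY : W ⊙ Y = Y)
    (lam : ℝ) (hlam : 0 < lam)
    (B : Matrix (Fin m) (Fin p) ℝ)
    (K : Matrix (Fin l) (Fin l) ℝ) (F : Matrix (Fin l) (Fin r) ℝ)
    (hK : K = F * Fᵀ)
    (AF : Matrix (Fin r) (Fin p) ℝ)
    (hAF : Fᵀ * (W ⊙ (F * AF * Bᵀ)) * B + lam • AF = Fᵀ * Y * B)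
    (A : Matrix (Fin l) (Fin p) ℝ) (hA : Fᵀ * A = AF) :
    K * (lam⁻¹ • ((W ⊙ (K * A * Bᵀ - Y)) * B) + A) = 0 := by
  subst hK
  exact gram_mul_masked_residual_smul_add_eq_zero hY hlam.ne' hAF hA

/-- Suppose `K = F Fᵀ`. If `A_F` satisfies `Fᵀ (W ⊙ (F A_F Bᵀ)) B + λ A_F = Fᵀ Y B`
and `Fᵀ A = A_F`, then `K [(W ⊙ (K A Bᵀ − Y)) B / λ + A] = 0`. -/
theorem stmt14 {l m p r : ℕ} (hl : 1 ≤ l) (hm : 1 ≤ m) (hp : 1 ≤ p) (hr : 1 ≤ r)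
    (W Y : Matrix (Fin l) (Fin m) ℝ)
    (hW : ∀ i j, W i j = 0 ∨ W i j = 1) (hY : W ⊙ Y = Y)
    (lam : ℝ) (hlam : 0 < lam)
    (B : Matrix (Fin m) (Fin p) ℝ)
    (K : Matrix (Fin l) (Fin l) ℝ) (F : Matrix (Fin l) (Fin r) ℝ)
    (hK : K = F * Fᵀ)
    (AF : Matrix (Fin r) (Fin p) ℝ)
    (hAF : Fᵀ * (W ⊙ (F * AF * Bᵀ)) * B + lam • AF = Fᵀ * Y * B)
    (A : Matrix (Fin l) (Fin p) ℝ) (hA : Fᵀ * A = AF) :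
    K * (lam⁻¹ • ((W ⊙ (K * A * Bᵀ - Y)) * B) + A) = 0 :=
  stmt14_general W Y hY lam hlam B K F hK AF hAF A hA
end

section
/- Fix n ≥ 1. For binary vectors u, v ∈ {0,1}^n, let d_H(u,v) = (1/n)·|{i : u_i ≠ v_i}| denote the normalized Hamming distance. Let N ≥ 1, and let (id_1, x_1), …, (id_N, x_N) be points where each id_i belongs to an arbitrary set and each x_i ∈ {0,1}^n. Then the N×N matrix M with entries M_{ij} = [id_i = id_j] + exp(−d_H(x_i, x_j)) is symmetric positive semidefinite, where [id_i = id_j] equals 1 if id_i = id_j and 0 otherwise. -/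
/-!
With `c = exp (-1/n)` the kernel factors over coordinates:
`exp (-d_H(u, v)) = ∏ᵢ (if uᵢ = vᵢ then 1 else c)`. Each factor is `(1 - c) [uᵢ = vᵢ] + c`,
a nonnegative combination of equality-indicator kernels, and those are positive semidefinite
because they are pullbacks of the identity matrix. The Schur product theorem makes the product
positive semidefinite, and adding the indicator kernel `[idᵢ = idⱼ]` keeps it so.
-/

open Matrix

/-- Normalized Hamming distance between two binary vectors of length `n`. -/
noncomputable def hammingDistNormalized {n : ℕ} (u v : Fin n → Bool) : ℝ :=
  (Finset.univ.filter fun i => u i ≠ v i).card / n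

open scoped ComplexOrder

namespace Matrix

variable {ι 𝕜 : Type*} [RCLike 𝕜]

theorem posSemidef_ite_eq_one_zero {β : Type*} [DecidableEq β] (f : ι → β) :
    (of fun i j => if f i = f j then (1 : 𝕜) else 0).PosSemidef := by
  convert (PosSemidef.one : (1 : Matrix β β 𝕜).PosSemidef).submatrix f using 1
  ext i j
  simp [one_apply]

theorem posSemidef_ite_eq_one_of_le_one {β : Type*} [DecidableEq β] (f : ι → β) {c : 𝕜}
    (hc₀ : 0 ≤ c) (hc₁ : c ≤ 1) :
    (of fun i j => if f i = f j then (1 : 𝕜) else c).PosSemidef := by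
  have hsplit : (of fun i j => if f i = f j then (1 : 𝕜) else c) =
      (1 - c) • of (fun i j => if f i = f j then (1 : 𝕜) else 0) +
        c • of (fun i j => if (fun _ => ()) i = (fun _ => ()) j then (1 : 𝕜) else 0) := by
    ext i j
    by_cases h : f i = f j <;> simp [h]
  rw [hsplit]
  exact ((posSemidef_ite_eq_one_zero f).smul (sub_nonneg.mpr hc₁)).add
    ((posSemidef_ite_eq_one_zero _).smul hc₀)

theorem posSemidef_finsetProd_hadamard {κ : Type*} (s : Finset κ) {A : κ → Matrix ι ι 𝕜}
    (hA : ∀ t ∈ s, (A t).PosSemidef) : (of fun i j => ∏ t ∈ s, A t i j).PosSemidef := by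
  classical
  induction s using Finset.induction with
  | empty => simpa using posSemidef_ite_eq_one_zero (𝕜 := 𝕜) fun _ : ι => ()
  | insert t s ht ih =>
    simp_rw [Finset.prod_insert ht]
    exact (hA t (s.mem_insert_self t)).hadamard (ih fun u hu => hA u (s.mem_insert_of_mem hu))

end Matrix

theorem exp_neg_hammingDistNormalized {n : ℕ} (u v : Fin n → Bool) :
    Real.exp (-hammingDistNormalized u v) =
      ∏ i, if u i = v i then 1 else Real.exp (-(1 / n)) := by
  rw [hammingDistNormalized, Finset.card_filter, Nat.cast_sum, Finset.sum_div,
    ← Finset.sum_neg_distrib, Real.exp_sum]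
  refine Finset.prod_congr rfl fun i _ => ?_
  by_cases h : u i = v i <;> simp [h]

theorem stmt19_general {n N : ℕ}
    {α : Type*} [DecidableEq α]
    (ids : Fin N → α) (x : Fin N → (Fin n → Bool)) :
    (Matrix.of fun i j : Fin N =>
      (if ids i = ids j then (1 : ℝ) else 0)
        + Real.exp (-(hammingDistNormalized (x i) (x j)))).PosSemidef := by
  have hc₀ : 0 ≤ Real.exp (-(1 / n)) := (Real.exp_pos _).le
  have hc₁ : Real.exp (-(1 / n)) ≤ 1 := Real.exp_le_one_iff.mpr (by simp)
  have hexp : (of fun i j : Fin N => Real.exp (-hammingDistNormalized (x i) (x j))).PosSemidef := by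
    simp_rw [exp_neg_hammingDistNormalized]
    exact posSemidef_finsetProd_hadamard _ fun t _ =>
      posSemidef_ite_eq_one_of_le_one (fun k => x k t) hc₀ hc₁
  exact (posSemidef_ite_eq_one_zero ids).add hexp

/-- The matrix `M_{ij} = [id_i = id_j] + exp(−d_H(x_i, x_j))` is symmetric positive
semidefinite. -/
theorem stmt19 {n N : ℕ} (hn : 1 ≤ n) (hN : 1 ≤ N)
    {α : Type*} [DecidableEq α]
    (ids : Fin N → α) (x : Fin N → (Fin n → Bool)) :
    (Matrix.of fun i j : Fin N =>
      (if ids i = ids j then (1 : ℝ) else 0)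
        + Real.exp (-(hammingDistNormalized (x i) (x j)))).PosSemidef :=
  stmt19_general ids x
end
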